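/- For each i with 2 ≤ i ≤ d, the polynomial z_i := Σ_{k=0}^{i−2} (−1)^k · C(i,k) · x_{i−k} · x_1^k · t^{i−k−1} + (i−1)·(−1)^{i+1}·x_1^i is annihilated by the derivation D_1 = t·∂/∂x_1 + 2x_1·∂/∂x_2 + ... + d·x_{d−1}·∂/∂x_d. -/

import Mathlib

open MvPolynomial
open Fin.NatCast

/-- The derivation `D₁ = Σ_{j=1}^{d} j·x_{j-1}·∂/∂x_j` on `ℂ[t, x_1, …, x_d]`,
with variable `0` playing the role of `t = x_0`. -/
noncomputable def D1 (d : ℕ) (f : MvPolynomial (Fin (d+1)) ℂ) : MvPolynomial (Fin (d+1)) ℂ :=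
  ∑ j ∈ Finset.range d, (((j+1 : ℕ)) : ℂ) •
    (X ((j : ℕ) : Fin (d+1)) * pderiv (((j+1 : ℕ)) : Fin (d+1)) f)

/-- The semi-invariant
`z_i = Σ_{k=0}^{i-2} (-1)^k C(i,k) x_{i-k} x_1^k t^{i-k-1} + (i-1)(-1)^{i+1} x_1^i`. -/
noncomputable def z (d i : ℕ) : MvPolynomial (Fin (d+1)) ℂ :=
  (∑ k ∈ Finset.range (i-1), ((-1:ℂ)^k * (i.choose k : ℂ)) •
      (X (((i-k : ℕ)) : Fin (d+1)) * X 1 ^ k * X 0 ^ (i-k-1))) +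
  (((i-1 : ℕ) : ℂ) * (-1:ℂ)^(i+1)) • (X 1 ^ i : MvPolynomial (Fin (d+1)) ℂ)
/-! `D1 d` is the derivation with `t ↦ 0`, `x₁ ↦ t` and `x_a ↦ a x_{a-1}`. On the `k`-th summand
`(-1)^k C(i,k) x_{i-k} x₁^k t^{i-k-1}` of `z_i` it gives `w_{k+1} - w_k`, where
`w_k = zTelescope d i k = -(-1)^k C(i,k) k x_{i-k} x₁^{k-1} t^{i-k}`, because `C(i,k+1) (k+1) = C(i,k) (i-k)`.
The sum therefore telescopes to `w_{i-1} = (-1)^i i (i-1) t x₁^{i-1}`, which cancels the image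
`(i-1) (-1)^{i+1} i t x₁^{i-1}` of the last term `(i-1) (-1)^{i+1} x₁^i`. -/

lemma Fin.natCast_eq_natCast_iff {n a b : ℕ} (ha : a < n + 1) (hb : b < n + 1) :
    (a : Fin (n + 1)) = b ↔ a = b := by
  rw [Fin.ext_iff, Fin.val_cast_of_lt ha, Fin.val_cast_of_lt hb]

section

variable {d : ℕ}

local notation "𝓡" => MvPolynomial (Fin (d + 1)) ℂ

variable (d) in
noncomputable def derivationD1 : Derivation ℂ 𝓡 𝓡 :=
  ∑ j ∈ Finset.range d, (((j + 1 : ℕ) : ℂ) • (X (j : Fin (d + 1)) : 𝓡)) •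
    pderiv ((j + 1 : ℕ) : Fin (d + 1))

variable (d) in
theorem coe_derivationD1 : ⇑(derivationD1 d) = D1 d := by
  funext f
  rw [derivationD1, D1, ← Derivation.coeFnAddMonoidHom_apply, map_sum, Finset.sum_apply]
  simp [Derivation.coeFnAddMonoidHom_apply]

theorem derivationD1_X_natCast {a : ℕ} (ha : a ≤ d) :
    derivationD1 d (X (a : Fin (d + 1))) = (a : ℂ) • (X ((a - 1 : ℕ) : Fin (d + 1)) : 𝓡) := by
  have hterm : ∀ j ∈ Finset.range d, ((j + 1 : ℕ) : ℂ) •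
      ((X (j : Fin (d + 1)) : 𝓡) * pderiv ((j + 1 : ℕ) : Fin (d + 1)) (X (a : Fin (d + 1)))) =
      if j + 1 = a then (a : ℂ) • (X ((a - 1 : ℕ) : Fin (d + 1)) : 𝓡) else 0 := by
    intro j hj
    split_ifs with h
    · subst h; simp
    · rw [pderiv_X_of_ne (mt (Fin.natCast_eq_natCast_iff (by omega)
        (by simp at hj; omega)).1 (Ne.symm h))]
      simp
  rw [coe_derivationD1, D1, Finset.sum_congr rfl hterm]
  cases a with
  | zero => simp
  | succ b => simp [Finset.sum_ite_eq', show b < d by omega]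

theorem derivationD1_X_zero : derivationD1 d (X 0) = 0 := by
  simpa using derivationD1_X_natCast (d := d) (a := 0) d.zero_le

theorem derivationD1_X_one (hd : 1 ≤ d) : derivationD1 d (X 1) = X 0 := by
  simpa using derivationD1_X_natCast (d := d) (a := 1) hd

theorem derivationD1_X_mul_X_one_pow_mul_X_zero_pow {a : ℕ} (ha : a ≤ d) (hd : 1 ≤ d) (k m : ℕ) :
    derivationD1 d (X (a : Fin (d + 1)) * X 1 ^ k * X 0 ^ m) =
      (a : ℂ) • (X ((a - 1 : ℕ) : Fin (d + 1)) * X 1 ^ k * X 0 ^ m : 𝓡) +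
      (k : ℂ) • (X (a : Fin (d + 1)) * X 1 ^ (k - 1) * X 0 ^ (m + 1) : 𝓡) := by
  simp only [Derivation.leibniz, Derivation.leibniz_pow, derivationD1_X_natCast ha,
    derivationD1_X_one hd, derivationD1_X_zero]
  simp only [smul_eq_C_mul, map_natCast, smul_zero, nsmul_eq_mul]
  ring

variable (d) in
noncomputable def zTelescope (i k : ℕ) : 𝓡 :=
  (-(-1 : ℂ) ^ k * i.choose k * k) •
    (X ((i - k : ℕ) : Fin (d + 1)) * X 1 ^ (k - 1) * X 0 ^ (i - k))

theorem zTelescope_zero (i : ℕ) : zTelescope d i 0 = 0 := by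
  simp [zTelescope]

theorem zTelescope_add_two_add_one (n : ℕ) :
    zTelescope d (n + 2) (n + 1) = ((-1 : ℂ) ^ n * (n + 2) * (n + 1)) • (X 1 ^ (n + 1) * X 0 : 𝓡) := by
  rw [zTelescope, show n + 2 - (n + 1) = 1 by omega, Nat.add_sub_cancel, Nat.choose_succ_self_right,
    pow_one, Nat.cast_one, pow_succ' (X 1 : 𝓡)]
  push_cast
  congr 1
  ring

theorem derivationD1_z_summand {i k : ℕ} (hk : k + 2 ≤ i) (hid : i ≤ d) :
    derivationD1 d (((-1 : ℂ) ^ k * i.choose k) •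
        (X ((i - k : ℕ) : Fin (d + 1)) * X 1 ^ k * X 0 ^ (i - k - 1) : 𝓡)) =
      zTelescope d i (k + 1) - zTelescope d i k := by
  have hc : -(-1 : ℂ) ^ (k + 1) * (i.choose (k + 1) : ℂ) * ((k + 1 : ℕ) : ℂ) =
      (-1) ^ k * i.choose k * ((i - k : ℕ) : ℂ) := by
    rw [mul_assoc, ← Nat.cast_mul, Nat.choose_succ_right_eq, Nat.cast_mul]
    ring
  rw [Derivation.map_smul, derivationD1_X_mul_X_one_pow_mul_X_zero_pow (by omega) (by omega),
    zTelescope, zTelescope, hc, show i - (k + 1) = i - k - 1 by omega,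
    show i - k - 1 + 1 = i - k by omega, Nat.add_sub_cancel]
  module

end

theorem stmt1_general (d : ℕ) (i : ℕ) (hi2 : 2 ≤ i) (hid : i ≤ d) :
    D1 d (z d i) = 0 := by
  rw [← coe_derivationD1, z, map_add, map_sum,
    Finset.sum_congr rfl fun k hk => derivationD1_z_summand (by simp at hk; omega) hid,
    Finset.sum_range_sub, zTelescope_zero, sub_zero, Derivation.map_smul,
    Derivation.leibniz_pow, derivationD1_X_one (by omega)]
  obtain ⟨n, rfl⟩ : ∃ n, i = n + 2 := ⟨i - 2, by omega⟩
  rw [show n + 2 - 1 = n + 1 by omega, zTelescope_add_two_add_one, smul_eq_mul,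
    ← Nat.cast_smul_eq_nsmul ℂ, smul_smul, ← add_smul]
  convert zero_smul ℂ _
  push_cast
  ring

theorem stmt1 (d : ℕ) (hd : 2 ≤ d) (i : ℕ) (hi2 : 2 ≤ i) (hid : i ≤ d) :
    D1 d (z d i) = 0 :=
  stmt1_general d i hi2 hid
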